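/- Let μ be a probability measure on E_Δ and σ an (M^μ_t)_{t≥0}-stopping time, and set σ_ζ := σ·I_{{σ<ζ}} + ∞·I_{{σ≥ζ}}. Then σ_ζ is an (F^{h,μ}_t)_{t≥0}-stopping time, and Λ ∩ {σ < ζ} ∈ F^{h,μ}_{σ_ζ} for every Λ ∈ M^μ_σ. -/

import Mathlib

open MeasureTheory Set Filter
open scoped NNReal ENNReal

noncomputable section

variable {S : Type*} [MeasurableSpace S] {Ω : Type*}

/-- The natural filtration `F⁰_t = σ(X_s : s ∈ [0,t])` of the process `X`. -/
def F0 (X : ℝ≥0 → Ω → S) (t : ℝ≥0) : MeasurableSpace Ω :=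
  ⨆ s ∈ Set.Iic t, MeasurableSpace.comap (X s) inferInstance

/-- `F⁰_∞ = σ(X_s : s ≥ 0)`. -/
def F0inf (X : ℝ≥0 → Ω → S) : MeasurableSpace Ω :=
  ⨆ s : ℝ≥0, MeasurableSpace.comap (X s) inferInstance

/-- `F⁰_{t+} = ⋂_{s > t} F⁰_s`. -/
def F0plus (X : ℝ≥0 → Ω → S) (t : ℝ≥0) : MeasurableSpace Ω :=
  ⨅ s ∈ Set.Ioi t, F0 X s

/-- The life time `ζ(ω) = inf {t ≥ 0 : X_t(ω) = Δ}` (with value `∞` if the path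
never reaches the cemetery `Δ`). -/
def lifetime (Δ : S) (X : ℝ≥0 → Ω → S) (ω : Ω) : ℝ≥0∞ :=
  ⨅ (t : ℝ≥0) (_ : X t ω = Δ), (t : ℝ≥0∞)

variable (Δ : S)

/-- `Q̄_{x,t}[f ; t < ζ] := h(x)·E^h_x[e^{αt}·f/h(X_t) ; t < ζ]`, the σ-finite
distribution up to time `t` applied to a nonnegative integrand `f`. -/
def Qbar (α : ℝ) (h : S → ℝ≥0∞) (X : ℝ≥0 → Ω → S)
    (P : S → @Measure Ω (F0inf X)) (x : S) (t : ℝ≥0) (f : Ω → ℝ≥0∞) : ℝ≥0∞ :=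
  h x * ∫⁻ ω in {ω | (t : ℝ≥0∞) < lifetime Δ X ω},
      ENNReal.ofReal (Real.exp (α * (t : ℝ))) * f ω * (h (X t ω))⁻¹ ∂(P x)

/-- `Q̄_{x,t}(Λ ; t < ζ)` of a set `Λ`. -/
def QbarSet (α : ℝ) (h : S → ℝ≥0∞) (X : ℝ≥0 → Ω → S)
    (P : S → @Measure Ω (F0inf X)) (x : S) (t : ℝ≥0) (Λ : Set Ω) : ℝ≥0∞ :=
  Qbar Δ α h X P x t (Λ.indicator 1)

/-- `Q̄_{μ,t}(Λ ; t < ζ) = ∫ Q̄_{x,t}(Λ ; t < ζ) μ(dx)` (note `Q̄_{Δ,t} = 0`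
automatically since `h Δ = 0`). -/
def Qmu (α : ℝ) (h : S → ℝ≥0∞) (X : ℝ≥0 → Ω → S)
    (P : S → @Measure Ω (F0inf X)) (μ : Measure S) (t : ℝ≥0) (Λ : Set Ω) : ℝ≥0∞ :=
  ∫⁻ x, QbarSet Δ α h X P x t Λ ∂μ

/-- `P^h_μ(Λ) = ∫ P^h_x(Λ) μ(dx)`. -/
def Pmu (X : ℝ≥0 → Ω → S) (P : S → @Measure Ω (F0inf X)) (μ : Measure S)
    (Λ : Set Ω) : ℝ≥0∞ :=
  ∫⁻ x, P x Λ ∂μ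

/-- `P^h_μ(Λ ; t < ζ)`. -/
def PmuT (X : ℝ≥0 → Ω → S) (P : S → @Measure Ω (F0inf X)) (μ : Measure S)
    (t : ℝ≥0) (Λ : Set Ω) : ℝ≥0∞ :=
  ∫⁻ x, P x (Λ ∩ {ω | (t : ℝ≥0∞) < lifetime Δ X ω}) ∂μ

/-- The augmented σ-field `M^μ_t`. -/
def Mmu (α : ℝ) (h : S → ℝ≥0∞) (X : ℝ≥0 → Ω → S)
    (P : S → @Measure Ω (F0inf X)) (μ : Measure S) (t : ℝ≥0) : Set (Set Ω) :=
  {Λ | ∃ Λ' Γ : Set Ω, MeasurableSet[F0 X t] Λ' ∧ MeasurableSet[F0plus X t] Γ ∧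
      symmDiff Λ Λ' ⊆ Γ ∧ ∀ T : ℝ≥0, t < T → Qmu Δ α h X P μ T Γ = 0}

/-- The auxiliary family `G^{μ,1}_t`. -/
def Gmu1 (α : ℝ) (h : S → ℝ≥0∞) (X : ℝ≥0 → Ω → S)
    (P : S → @Measure Ω (F0inf X)) (μ : Measure S) (t : ℝ≥0) : Set (Set Ω) :=
  {Λ | ∃ Λ' Γ : Set Ω, MeasurableSet[F0 X t] Λ' ∧ MeasurableSet[F0plus X t] Γ ∧
      symmDiff Λ Λ' ⊆ Γ ∧ PmuT Δ X P μ t Γ = 0}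

/-- The auxiliary family `G^{μ,2}_t`. -/
def Gmu2 (α : ℝ) (h : S → ℝ≥0∞) (X : ℝ≥0 → Ω → S)
    (P : S → @Measure Ω (F0inf X)) (μ : Measure S) (t : ℝ≥0) : Set (Set Ω) :=
  {Λ | ∃ Λ' Γ : Set Ω, MeasurableSet[F0plus X t] Λ' ∧ MeasurableSet[F0plus X t] Γ ∧
      symmDiff Λ Λ' ⊆ Γ ∧ PmuT Δ X P μ t Γ = 0}

/-- The `P^h_μ`-augmentation `F^{h,μ}_t` of `F⁰_t` in `F⁰_∞`. -/
def Fhmu (X : ℝ≥0 → Ω → S) (P : S → @Measure Ω (F0inf X)) (μ : Measure S)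
    (t : ℝ≥0) : Set (Set Ω) :=
  {Λ | ∃ Λ' Γ : Set Ω, MeasurableSet[F0 X t] Λ' ∧ MeasurableSet[F0inf X] Γ ∧
      symmDiff Λ Λ' ⊆ Γ ∧ Pmu X P μ Γ = 0}

/-- `M_t = ⋂_μ M^μ_t`, the intersection over all probability measures `μ` on `E_Δ`. -/
def Mt (α : ℝ) (h : S → ℝ≥0∞) (X : ℝ≥0 → Ω → S)
    (P : S → @Measure Ω (F0inf X)) (t : ℝ≥0) : Set (Set Ω) :=
  {Λ | ∀ μ : Measure S, IsProbabilityMeasure μ → Λ ∈ Mmu Δ α h X P μ t}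

/-- `M_∞ = σ(⋃_t M_t)`. -/
def Minf (α : ℝ) (h : S → ℝ≥0∞) (X : ℝ≥0 → Ω → S)
    (P : S → @Measure Ω (F0inf X)) : MeasurableSpace Ω :=
  MeasurableSpace.generateFrom {Λ | ∃ t : ℝ≥0, Λ ∈ Mt Δ α h X P t}

/-- `M^μ_∞ = σ(⋃_t M^μ_t)`. -/
def Mmuinf (α : ℝ) (h : S → ℝ≥0∞) (X : ℝ≥0 → Ω → S)
    (P : S → @Measure Ω (F0inf X)) (μ : Measure S) : MeasurableSpace Ω :=
  MeasurableSpace.generateFrom {Λ | ∃ t : ℝ≥0, Λ ∈ Mmu Δ α h X P μ t}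

/-- `M_σ` for an `(M_t)`-stopping time `σ`. -/
def Msigma (α : ℝ) (h : S → ℝ≥0∞) (X : ℝ≥0 → Ω → S)
    (P : S → @Measure Ω (F0inf X)) (σ : Ω → ℝ≥0∞) : Set (Set Ω) :=
  {Λ | MeasurableSet[Minf Δ α h X P] Λ ∧
      ∀ t : ℝ≥0, Λ ∩ {ω | σ ω ≤ (t : ℝ≥0∞)} ∈ Mt Δ α h X P t}

/-- `M^μ_σ` for an `(M^μ_t)`-stopping time `σ`. -/
def Mmusigma (α : ℝ) (h : S → ℝ≥0∞) (X : ℝ≥0 → Ω → S)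
    (P : S → @Measure Ω (F0inf X)) (μ : Measure S) (σ : Ω → ℝ≥0∞) : Set (Set Ω) :=
  {Λ | MeasurableSet[Mmuinf Δ α h X P μ] Λ ∧
      ∀ t : ℝ≥0, Λ ∩ {ω | σ ω ≤ (t : ℝ≥0∞)} ∈ Mmu Δ α h X P μ t}

/-- `F^{h,μ}_T` for an `(F^{h,μ}_t)`-stopping time `T`. -/
def FhmuStop (X : ℝ≥0 → Ω → S) (P : S → @Measure Ω (F0inf X)) (μ : Measure S)
    (T : Ω → ℝ≥0∞) : Set (Set Ω) :=
  {Λ | ∀ t : ℝ≥0, Λ ∩ {ω | T ω ≤ (t : ℝ≥0∞)} ∈ Fhmu X P μ t}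

/-- `X_σ`, with the convention `X_∞ = Δ`. -/
def Xstop (X : ℝ≥0 → Ω → S) (σ : Ω → ℝ≥0∞) (ω : Ω) : S :=
  if σ ω < ∞ then X (σ ω).toNNReal ω else Δ

/-- The shift `θ_σ` at a random time `σ`. -/
def thetaStop (θ : ℝ≥0 → Ω → Ω) (σ : Ω → ℝ≥0∞) (ω : Ω) : Ω :=
  θ (σ ω).toNNReal ω

/-- `Q̄_{x,σ}[f ; σ < ζ] := h(x)·E^h_x[e^{ασ}·f/h(X_σ) ; σ < ζ]`, the σ-finite
distribution up to a stopping time `σ` applied to a nonnegative integrand `f`. -/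
def QbarStop (α : ℝ) (h : S → ℝ≥0∞) (X : ℝ≥0 → Ω → S)
    (P : S → @Measure Ω (F0inf X)) (x : S) (σ : Ω → ℝ≥0∞) (f : Ω → ℝ≥0∞) : ℝ≥0∞ :=
  h x * ∫⁻ ω in {ω | σ ω < lifetime Δ X ω},
      ENNReal.ofReal (Real.exp (α * (σ ω).toReal)) * f ω * (h (Xstop Δ X σ ω))⁻¹ ∂(P x)

/-- `Q̄_{x,σ}(Λ ; σ < ζ)` of a set `Λ`. -/
def QbarStopSet (α : ℝ) (h : S → ℝ≥0∞) (X : ℝ≥0 → Ω → S)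
    (P : S → @Measure Ω (F0inf X)) (x : S) (σ : Ω → ℝ≥0∞) (Λ : Set Ω) : ℝ≥0∞ :=
  QbarStop Δ α h X P x σ (Λ.indicator 1)

/-- The entrance time `D_B = inf {t ≥ 0 : X_t ∈ B}`. -/
def entranceTime (B : Set S) (X : ℝ≥0 → Ω → S) (ω : Ω) : ℝ≥0∞ :=
  ⨅ (t : ℝ≥0) (_ : X t ω ∈ B), (t : ℝ≥0∞)

/-- The hitting time `σ_B = inf {t > 0 : X_t ∈ B}`. -/
def hittingTime (B : Set S) (X : ℝ≥0 → Ω → S) (ω : Ω) : ℝ≥0∞ :=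
  ⨅ (t : ℝ≥0) (_ : 0 < t ∧ X t ω ∈ B), (t : ℝ≥0∞)

/-- A set is universally measurable (`∈ B(E_Δ)*`) if it lies in the completion of
`B(E_Δ)` with respect to every probability measure. -/
def UniversallyMeasurableSet (A : Set S) : Prop :=
  ∀ ν : Measure S, IsProbabilityMeasure ν → NullMeasurableSet A ν

/-- Iterated kernel integral
`∫ κ_{t₁-t₀}(x,dx₁) ∫ κ_{t₂-t₁}(x₁,dx₂) ⋯ f(x₁,…,xₙ)`, where `t₀` is the
starting time. -/
def iterK (κ : ℝ≥0 → S → Measure S) :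
    (n : ℕ) → (Fin (n + 1) → ℝ≥0) → ℝ≥0 → S → ((Fin (n + 1) → S) → ℝ≥0∞) → ℝ≥0∞
  | 0, t, t0, x, f => ∫⁻ y, f (fun _ => y) ∂(κ (t 0 - t0) x)
  | n + 1, t, t0, x, f =>
      ∫⁻ y, iterK κ n (fun i => t i.succ) (t 0) y (fun v => f (Fin.cons y v))
        ∂(κ (t 0 - t0) x)


/-- `γ = (σ + τ∘θ_σ)_ζ`, the time `σ + τ∘θ_σ` truncated to `∞` off `{σ + τ∘θ_σ < ζ}`. -/
def gammaTime (Δ : S) (X : ℝ≥0 → Ω → S) (θ : ℝ≥0 → Ω → Ω) (σ τ : Ω → ℝ≥0∞)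
    (ω : Ω) : ℝ≥0∞ :=
  if σ ω + τ (thetaStop θ σ ω) < lifetime Δ X ω then σ ω + τ (thetaStop θ σ ω)
  else ∞

end

/-!
The event `{σ_ζ ≤ t}` is the countable union, over `r = t` and the rationals `r ≤ t`, of
`{σ ≤ r} ∩ {r < ζ}`. A set in `M^μ_r` differs from an `F⁰_r`-set by some `Γ ∈ F⁰_{r+}` that is
`Q̄_{μ,T}`-null for all `T > r`; as `h` is positive and finite off `Δ`, `Γ ∩ {T < ζ}` is
`P^h_x`-null for `μ`-a.e. `x`, and letting `T ↓ r` along the rationals, `Γ ∩ {r < ζ}` is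
`P^h_μ`-null. Finally `{r < ζ}` is `F⁰_t`-measurable for `r < t`, while
`{t < ζ} = θ_t⁻¹{0 < ζ}` agrees `P^h_μ`-a.s. with `{P^h_{X_t}(0 < ζ) = 1}` by the Markov
property and Blumenthal's zero-one law for `{0 < ζ}`.
-/

section Filtration

variable {S Ω : Type*} [MeasurableSpace S] {X : ℝ≥0 → Ω → S}

lemma F0_mono {s t : ℝ≥0} (hst : s ≤ t) : F0 X s ≤ F0 X t :=
  biSup_mono fun _ hu => le_trans hu hst

lemma F0_le_F0inf (t : ℝ≥0) : F0 X t ≤ F0inf X :=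
  iSup₂_le fun s _ => le_iSup (fun u => MeasurableSpace.comap (X u) inferInstance) s

lemma F0_le_F0plus (t : ℝ≥0) : F0 X t ≤ F0plus X t :=
  le_iInf₂ fun _ hs => F0_mono (le_of_lt hs)

lemma F0plus_le_F0inf (t : ℝ≥0) : F0plus X t ≤ F0inf X :=
  (biInf_le (fun s => F0 X s) (mem_Ioi.2 (lt_add_one t))).trans (F0_le_F0inf _)

lemma measurable_F0 {s t : ℝ≥0} (hst : s ≤ t) : Measurable[F0 X t] (X s) :=
  Measurable.of_comap_le (le_biSup (fun u => MeasurableSpace.comap (X u) inferInstance) hst)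

lemma measurable_F0inf (s : ℝ≥0) : Measurable[F0inf X] (X s) :=
  Measurable.of_comap_le (le_iSup (fun u => MeasurableSpace.comap (X u) inferInstance) s)

lemma measurable_shift {θ : ℝ≥0 → Ω → Ω} (hθ : ∀ s t ω, X t (θ s ω) = X (t + s) ω)
    (s : ℝ≥0) : Measurable[F0inf X, F0inf X] (θ s) := by
  refine Measurable.of_comap_le ?_
  rw [F0inf, MeasurableSpace.comap_iSup]
  refine iSup_le fun t => ?_
  rw [MeasurableSpace.comap_comp, show X t ∘ θ s = X (t + s) from funext (hθ s t)]
  exact le_iSup (fun u => MeasurableSpace.comap (X u) inferInstance) (t + s)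

end Filtration

section Lifetime

variable {S Ω : Type*} {Δ : S} {X : ℝ≥0 → Ω → S} {ω : Ω}

def IsAbsorbing (Δ : S) (X : ℝ≥0 → Ω → S) : Prop :=
  ∀ (ω : Ω) (s t : ℝ≥0), s ≤ t → X s ω = Δ → X t ω = Δ

lemma ne_of_lt_lifetime {t : ℝ≥0} (ht : (t : ℝ≥0∞) < lifetime Δ X ω) : X t ω ≠ Δ :=
  fun hΔ => (iInf₂_le (f := fun (s : ℝ≥0) (_ : X s ω = Δ) => (s : ℝ≥0∞)) t hΔ).not_gt ht

lemma IsAbsorbing.le_lifetime (habs : IsAbsorbing Δ X) {s : ℝ≥0} (hs : X s ω ≠ Δ) :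
    (s : ℝ≥0∞) ≤ lifetime Δ X ω :=
  le_iInf₂ fun t ht => ENNReal.coe_le_coe.2 <| le_of_not_gt fun hts => hs (habs ω t s hts.le ht)

lemma IsAbsorbing.lt_lifetime_iff_exists_rat (habs : IsAbsorbing Δ X) {r : ℝ≥0} {b : ℝ≥0∞}
    (hrb : (r : ℝ≥0∞) < b) :
    (r : ℝ≥0∞) < lifetime Δ X ω ↔
      ∃ q : ℚ, r < (q : ℝ).toNNReal ∧ ((q : ℝ).toNNReal : ℝ≥0∞) < b ∧
        X (q : ℝ).toNNReal ω ≠ Δ := by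
  constructor
  · intro hr
    obtain ⟨q, -, hrq, hq⟩ := ENNReal.lt_iff_exists_rat_btwn.1 (lt_min hr hrb)
    exact ⟨q, ENNReal.coe_lt_coe.1 hrq, hq.trans_le (min_le_right _ _),
      ne_of_lt_lifetime (hq.trans_le (min_le_left _ _))⟩
  · rintro ⟨q, hrq, -, hq⟩
    exact (ENNReal.coe_lt_coe.2 hrq).trans_le (habs.le_lifetime hq)

lemma IsAbsorbing.lt_lifetime_iff (habs : IsAbsorbing Δ X) {r : ℝ≥0} :
    (r : ℝ≥0∞) < lifetime Δ X ω ↔ ∃ s : ℝ≥0, r < s ∧ X s ω ≠ Δ := by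
  constructor
  · intro hr
    obtain ⟨q, hrq, -, hq⟩ := (habs.lt_lifetime_iff_exists_rat ENNReal.coe_lt_top).1 hr
    exact ⟨_, hrq, hq⟩
  · rintro ⟨s, hrs, hs⟩
    exact (ENNReal.coe_lt_coe.2 hrs).trans_le (habs.le_lifetime hs)

lemma IsAbsorbing.lt_lifetime_shift_iff (habs : IsAbsorbing Δ X) {θ : ℝ≥0 → Ω → Ω}
    (hθ : ∀ s t ω, X t (θ s ω) = X (t + s) ω) (t : ℝ≥0) :
    (0 : ℝ≥0∞) < lifetime Δ X (θ t ω) ↔ (t : ℝ≥0∞) < lifetime Δ X ω := by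
  rw [← ENNReal.coe_zero, habs.lt_lifetime_iff, habs.lt_lifetime_iff]
  constructor
  · rintro ⟨s, hs, hX⟩
    exact ⟨s + t, lt_add_of_pos_left t hs, hθ t s ω ▸ hX⟩
  · rintro ⟨s, hts, hX⟩
    refine ⟨s - t, tsub_pos_of_lt hts, ?_⟩
    rwa [hθ, tsub_add_cancel_of_le hts.le]

variable [MeasurableSpace S] [MeasurableSingletonClass S]

lemma IsAbsorbing.measurableSet_lt_lifetime_F0 (habs : IsAbsorbing Δ X) {r s : ℝ≥0}
    (hrs : r < s) : MeasurableSet[F0 X s] {ω | (r : ℝ≥0∞) < lifetime Δ X ω} := by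
  have hU : {ω | (r : ℝ≥0∞) < lifetime Δ X ω} = ⋃ (q : ℚ)
      (_ : r < (q : ℝ).toNNReal ∧ (q : ℝ).toNNReal < s), X (q : ℝ).toNNReal ⁻¹' {Δ}ᶜ := by
    ext ω
    simp only [mem_ofPred_eq, habs.lt_lifetime_iff_exists_rat (ENNReal.coe_lt_coe.2 hrs),
      ENNReal.coe_lt_coe, mem_iUnion, mem_preimage, mem_compl_iff, mem_singleton_iff,
      exists_prop, and_assoc]
  rw [hU]
  exact MeasurableSet.iUnion fun q => MeasurableSet.iUnion fun hq =>
    measurable_F0 hq.2.le (measurableSet_singleton Δ).compl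

lemma IsAbsorbing.measurableSet_lt_lifetime (habs : IsAbsorbing Δ X) (r : ℝ≥0) :
    MeasurableSet[F0inf X] {ω | (r : ℝ≥0∞) < lifetime Δ X ω} :=
  F0_le_F0inf _ _ (habs.measurableSet_lt_lifetime_F0 (lt_add_one r))

lemma IsAbsorbing.measurableSet_lifetime_pos (habs : IsAbsorbing Δ X) :
    MeasurableSet[F0inf X] {ω | 0 < lifetime Δ X ω} := by
  simpa only [ENNReal.coe_zero] using habs.measurableSet_lt_lifetime 0

lemma IsAbsorbing.measurableSet_lt_lifetime_F0plus (habs : IsAbsorbing Δ X) (r : ℝ≥0) :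
    MeasurableSet[F0plus X r] {ω | (r : ℝ≥0∞) < lifetime Δ X ω} := by
  rw [F0plus, MeasurableSpace.measurableSet_iInf]
  exact fun s => MeasurableSpace.measurableSet_iInf.2 fun hs => habs.measurableSet_lt_lifetime_F0 hs

end Lifetime

section Markov

variable {S Ω : Type*} [MeasurableSpace S] {Δ : S} {X : ℝ≥0 → Ω → S} {θ : ℝ≥0 → Ω → Ω}
  {P : S → @Measure Ω (F0inf X)}

def HasMarkovProperty (X : ℝ≥0 → Ω → S) (θ : ℝ≥0 → Ω → Ω) (P : S → @Measure Ω (F0inf X)) :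
    Prop :=
  ∀ (s : ℝ≥0) (x : S) (Y : Ω → ℝ≥0∞), Measurable[F0inf X] Y →
    ∀ Λ : Set Ω, MeasurableSet[F0plus X s] Λ →
      ∫⁻ ω in Λ, Y (θ s ω) ∂(P x) = ∫⁻ ω in Λ, (∫⁻ ω', Y ω' ∂(P (X s ω))) ∂(P x)

lemma HasMarkovProperty.measure_inter_preimage_shift (hM : HasMarkovProperty X θ P)
    (hθ : ∀ s t ω, X t (θ s ω) = X (t + s) ω) {s : ℝ≥0} {Λ A : Set Ω}
    (hΛ : MeasurableSet[F0plus X s] Λ) (hA : MeasurableSet[F0inf X] A) (x : S) :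
    P x (Λ ∩ θ s ⁻¹' A) = ∫⁻ ω in Λ, P (X s ω) A ∂(P x) := by
  have hθA : MeasurableSet[F0inf X] (θ s ⁻¹' A) := measurable_shift hθ s hA
  have := hM s x (A.indicator 1) (measurable_const.indicator hA) Λ hΛ
  simp only [lintegral_indicator_one hA] at this
  rw [← this, inter_comm, ← Measure.restrict_apply hθA, ← lintegral_indicator_one hθA]
  rfl

lemma HasMarkovProperty.measure_preimage_inter_preimage_shift_eq_zero
    (hM : HasMarkovProperty X θ P) (hθ : ∀ s t ω, X t (θ s ω) = X (t + s) ω) {t : ℝ≥0}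
    {C : Set S} {A : Set Ω} (hC : MeasurableSet C) (hA : MeasurableSet[F0inf X] A)
    (hCA : ∀ y ∈ C, P y A = 0) (x : S) : P x (X t ⁻¹' C ∩ θ t ⁻¹' A) = 0 := by
  have hΛ : MeasurableSet[F0inf X] (X t ⁻¹' C) := measurable_F0inf t hC
  rw [hM.measure_inter_preimage_shift hθ (F0_le_F0plus t _ (measurable_F0 le_rfl hC)) hA,
    setLIntegral_congr_fun hΛ fun ω hω => hCA _ hω, lintegral_zero]

variable [MeasurableSingletonClass S] [∀ x, IsProbabilityMeasure (P x)]

lemma ae_X_zero_eq (hstart : ∀ x, P x {ω | X 0 ω = x} = 1) (x : S) : ∀ᵐ ω ∂(P x), X 0 ω = x :=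
  (prob_compl_eq_zero_iff (measurable_F0inf 0 (measurableSet_singleton x))).2 (hstart x)

lemma measure_lt_lifetime_cemetery (hstart : ∀ x, P x {ω | X 0 ω = x} = 1) (t : ℝ≥0) :
    P Δ {ω | (t : ℝ≥0∞) < lifetime Δ X ω} = 0 := by
  refine measure_eq_zero_iff_ae_notMem.2 ((ae_X_zero_eq hstart Δ).mono fun ω hω ht => ?_)
  exact ne_of_lt_lifetime (zero_le.trans_lt ht) (by simpa using hω)

lemma HasMarkovProperty.measure_lifetime_pos_eq_zero_or_one (hM : HasMarkovProperty X θ P)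
    (habs : IsAbsorbing Δ X) (hθ : ∀ s t ω, X t (θ s ω) = X (t + s) ω)
    (hstart : ∀ x, P x {ω | X 0 ω = x} = 1) (x : S) :
    P x {ω | 0 < lifetime Δ X ω} = 0 ∨ P x {ω | 0 < lifetime Δ X ω} = 1 := by
  set L := {ω | 0 < lifetime Δ X ω}
  have hL₀ : MeasurableSet[F0plus X 0] L := by
    simpa only [ENNReal.coe_zero] using habs.measurableSet_lt_lifetime_F0plus 0
  have hL : MeasurableSet[F0inf X] L := F0plus_le_F0inf 0 _ hL₀
  have hθL : θ 0 ⁻¹' L = L := by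
    ext ω; exact habs.lt_lifetime_shift_iff hθ 0
  have hsq : P x L = P x L * P x L := by
    have := hM.measure_inter_preimage_shift hθ hL₀ hL x
    rwa [hθL, inter_self, setLIntegral_congr_fun_ae hL ((ae_X_zero_eq hstart x).mono
      fun ω hω _ => by rw [hω]), setLIntegral_const, mul_comm] at this
  rcases eq_or_ne (P x L) 0 with h0 | h0
  · exact Or.inl h0
  · exact Or.inr ((ENNReal.mul_eq_left h0 (measure_ne_top _ _)).1 hsq.symm)

end Markov

section Augmentation

variable {S Ω : Type*} [MeasurableSpace S] {X : ℝ≥0 → Ω → S} {P : S → @Measure Ω (F0inf X)}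
  {μ : Measure S} {t : ℝ≥0} {Λ Λ₂ : Set Ω}

lemma measure_bind_eq_zero {N : Set Ω} (hN : MeasurableSet[F0inf X] N)
    (h : ∀ᵐ x ∂μ, P x N = 0) : μ.bind P N = 0 :=
  nonpos_iff_eq_zero.1 <| (Measure.bind_apply_le P hN).trans_eq <| by
    rw [lintegral_congr_ae h, lintegral_zero]

lemma mem_Fhmu_iff (hP : Measurable P) :
    Λ ∈ Fhmu X P μ t ↔ ∃ Λ', MeasurableSet[F0 X t] Λ' ∧ Λ =ᵐ[μ.bind P] Λ' := by
  let := F0inf X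
  have hP' := hP.aemeasurable (μ := μ)
  constructor
  · rintro ⟨Λ', Γ, hΛ', hΓ, hsub, hnull⟩
    refine ⟨Λ', hΛ', measure_symmDiff_eq_zero_iff.1 (measure_mono_null hsub ?_)⟩
    rwa [Measure.bind_apply hΓ hP']
  · rintro ⟨Λ', hΛ', hae⟩
    refine ⟨Λ', toMeasurable (μ.bind P) (symmDiff Λ Λ'), hΛ', measurableSet_toMeasurable _ _,
      subset_toMeasurable _ _, ?_⟩
    rw [Pmu, ← Measure.bind_apply (measurableSet_toMeasurable _ _) hP',
      measure_toMeasurable, measure_symmDiff_eq_zero_iff.2 hae]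

lemma mem_Fhmu_of_measurableSet (hΛ : MeasurableSet[F0 X t] Λ) : Λ ∈ Fhmu X P μ t :=
  ⟨Λ, ∅, hΛ, @MeasurableSet.empty _ (F0inf X), by simp, by simp [Pmu]⟩

lemma mem_Fhmu_of_ae_eq (hP : Measurable P) (hΛ : Λ ∈ Fhmu X P μ t)
    (h : Λ =ᵐ[μ.bind P] Λ₂) : Λ₂ ∈ Fhmu X P μ t := by
  obtain ⟨Λ', hΛ', hae⟩ := (mem_Fhmu_iff hP).1 hΛ
  exact (mem_Fhmu_iff hP).2 ⟨Λ', hΛ', h.symm.trans hae⟩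

lemma inter_mem_Fhmu (hP : Measurable P) (hΛ : Λ ∈ Fhmu X P μ t)
    (hΛ₂ : Λ₂ ∈ Fhmu X P μ t) : Λ ∩ Λ₂ ∈ Fhmu X P μ t := by
  obtain ⟨Λ', hΛ', hae⟩ := (mem_Fhmu_iff hP).1 hΛ
  obtain ⟨Λ₂', hΛ₂', hae₂⟩ := (mem_Fhmu_iff hP).1 hΛ₂
  exact (mem_Fhmu_iff hP).2 ⟨Λ' ∩ Λ₂', hΛ'.inter hΛ₂', hae.inter hae₂⟩

lemma biUnion_mem_Fhmu (hP : Measurable P) {ι : Type*} {I : Set ι} (hI : I.Countable)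
    {E : ι → Set Ω} (hE : ∀ i ∈ I, E i ∈ Fhmu X P μ t) : ⋃ i ∈ I, E i ∈ Fhmu X P μ t := by
  have := hI.to_subtype
  choose E' hE' hae using fun i : I => (mem_Fhmu_iff hP).1 (hE i i.2)
  rw [biUnion_eq_iUnion]
  exact (mem_Fhmu_iff hP).2 ⟨⋃ i, E' i, .iUnion hE', Filter.EventuallyEq.countable_iUnion hae⟩

end Augmentation

section LifetimeAugmentation

variable {S Ω : Type*} [MeasurableSpace S] [MeasurableSingletonClass S] {Δ : S}
  {X : ℝ≥0 → Ω → S} {θ : ℝ≥0 → Ω → Ω} {P : S → @Measure Ω (F0inf X)}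
  [∀ x, IsProbabilityMeasure (P x)] {μ : Measure S} {r t : ℝ≥0}

lemma HasMarkovProperty.lt_lifetime_ae_eq (hM : HasMarkovProperty X θ P)
    (habs : IsAbsorbing Δ X) (hθ : ∀ s t ω, X t (θ s ω) = X (t + s) ω)
    (hstart : ∀ x, P x {ω | X 0 ω = x} = 1) (hP : Measurable P) (t : ℝ≥0) (x : S) :
    {ω | (t : ℝ≥0∞) < lifetime Δ X ω}
      =ᵐ[P x] X t ⁻¹' {y | P y {ω | 0 < lifetime Δ X ω} = 1} := by
  set L := {ω | 0 < lifetime Δ X ω}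
  have hL : MeasurableSet[F0inf X] L := habs.measurableSet_lifetime_pos
  have hB : MeasurableSet {y | P y L = 1} :=
    (Measure.measurable_coe hL).comp hP (measurableSet_singleton 1)
  have hθL : θ t ⁻¹' L = {ω | (t : ℝ≥0∞) < lifetime Δ X ω} := by
    ext ω; exact habs.lt_lifetime_shift_iff hθ t
  rw [← hθL, ae_eq_set, sdiff_eq, sdiff_eq, inter_comm, ← preimage_compl, ← preimage_compl]
  exact ⟨hM.measure_preimage_inter_preimage_shift_eq_zero hθ hB.compl hL (fun y hy =>
      (hM.measure_lifetime_pos_eq_zero_or_one habs hθ hstart y).resolve_right hy) x,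
    hM.measure_preimage_inter_preimage_shift_eq_zero hθ hB hL.compl (fun y hy =>
      (prob_compl_eq_zero_iff hL).2 hy) x⟩

lemma HasMarkovProperty.setOf_lt_lifetime_mem_Fhmu (hM : HasMarkovProperty X θ P)
    (habs : IsAbsorbing Δ X) (hθ : ∀ s t ω, X t (θ s ω) = X (t + s) ω)
    (hstart : ∀ x, P x {ω | X 0 ω = x} = 1) (hP : Measurable P) (hrt : r ≤ t) :
    {ω | (r : ℝ≥0∞) < lifetime Δ X ω} ∈ Fhmu X P μ t := by
  rcases hrt.lt_or_eq with hrt | rfl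
  · exact mem_Fhmu_of_measurableSet (habs.measurableSet_lt_lifetime_F0 hrt)
  have hB : MeasurableSet {y | P y {ω | 0 < lifetime Δ X ω} = 1} :=
    (Measure.measurable_coe habs.measurableSet_lifetime_pos).comp hP (measurableSet_singleton 1)
  -- `{r < ζ}` is only `F⁰_{r+}`-measurable, but a.s. equal to an `F⁰_r`-set by the zero-one law.
  refine mem_Fhmu_of_ae_eq hP (mem_Fhmu_of_measurableSet (measurable_F0 le_rfl hB)) ?_
  rw [← measure_symmDiff_eq_zero_iff]
  refine measure_bind_eq_zero ((measurable_F0inf r hB).symmDiff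
    (habs.measurableSet_lt_lifetime r)) (ae_of_all _ fun x => ?_)
  exact measure_symmDiff_eq_zero_iff.2 (hM.lt_lifetime_ae_eq habs hθ hstart hP r x).symm

end LifetimeAugmentation

section Qbar

variable {S Ω : Type*} [MeasurableSpace S] {Δ : S} {X : ℝ≥0 → Ω → S}
  {P : S → @Measure Ω (F0inf X)} {h : S → ℝ≥0∞} {α : ℝ} {μ : Measure S} {Γ : Set Ω}

lemma measurable_Qbar_integrand (h_meas : Measurable h) (hΓ : MeasurableSet[F0inf X] Γ)
    (T : ℝ≥0) :
    Measurable[F0inf X] fun ω => ENNReal.ofReal (Real.exp (α * T)) * Γ.indicator 1 ω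
      * (h (X T ω))⁻¹ :=
  (measurable_const.mul (measurable_const.indicator hΓ)).mul
    (h_meas.comp (measurable_F0inf T)).inv

variable [MeasurableSingletonClass S]

lemma measurable_QbarSet (habs : IsAbsorbing Δ X) (h_meas : Measurable h) (hP : Measurable P)
    (hΓ : MeasurableSet[F0inf X] Γ) (T : ℝ≥0) :
    Measurable fun x => QbarSet Δ α h X P x T Γ := by
  let := F0inf X
  have hT := habs.measurableSet_lt_lifetime T
  simp only [QbarSet, Qbar, ← lintegral_indicator hT]
  exact h_meas.mul ((Measure.measurable_lintegral
    ((measurable_Qbar_integrand h_meas hΓ T).indicator hT)).comp hP)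

variable [∀ x, IsProbabilityMeasure (P x)]

lemma measure_inter_lt_lifetime_eq_zero_of_QbarSet_eq_zero (habs : IsAbsorbing Δ X)
    (h_meas : Measurable h) (h_pos : ∀ x, x ≠ Δ → 0 < h x ∧ h x < ∞)
    (hstart : ∀ x, P x {ω | X 0 ω = x} = 1) (hΓ : MeasurableSet[F0inf X] Γ) {T : ℝ≥0} {x : S}
    (hQ : QbarSet Δ α h X P x T Γ = 0) :
    P x (Γ ∩ {ω | (T : ℝ≥0∞) < lifetime Δ X ω}) = 0 := by
  by_cases hx : x = Δ
  · exact hx ▸ measure_mono_null inter_subset_right (measure_lt_lifetime_cemetery hstart T)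
  have hint := (mul_eq_zero.1 hQ).resolve_left (h_pos x hx).1.ne'
  rw [setLIntegral_eq_zero_iff (habs.measurableSet_lt_lifetime T)
    (measurable_Qbar_integrand h_meas hΓ T)] at hint
  -- The integrand `e^{αT} / h(X_T)` does not vanish on `{T < ζ}`, where `X_T ≠ Δ`.
  refine measure_eq_zero_iff_ae_notMem.2 (hint.mono fun ω hω ⟨hωΓ, hωT⟩ => ?_)
  exact (Real.exp_pos _).not_ge <| by
    simpa [indicator_of_mem hωΓ, (h_pos _ (ne_of_lt_lifetime hωT)).2.ne] using hω hωT

lemma ae_measure_inter_lt_lifetime_eq_zero (habs : IsAbsorbing Δ X) (h_meas : Measurable h)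
    (h_pos : ∀ x, x ≠ Δ → 0 < h x ∧ h x < ∞) (hstart : ∀ x, P x {ω | X 0 ω = x} = 1)
    (hP : Measurable P) (hΓ : MeasurableSet[F0inf X] Γ) {r : ℝ≥0}
    (hQ : ∀ T, r < T → Qmu Δ α h X P μ T Γ = 0) :
    ∀ᵐ x ∂μ, P x (Γ ∩ {ω | (r : ℝ≥0∞) < lifetime Δ X ω}) = 0 := by
  have hT : ∀ T, r < T → ∀ᵐ x ∂μ, P x (Γ ∩ {ω | (T : ℝ≥0∞) < lifetime Δ X ω}) = 0 :=
    fun T hT => ((lintegral_eq_zero_iff (measurable_QbarSet habs h_meas hP hΓ T)).1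
      (hQ T hT)).mono fun x hx =>
        measure_inter_lt_lifetime_eq_zero_of_QbarSet_eq_zero habs h_meas h_pos hstart hΓ hx
  have hall : ∀ᵐ x ∂μ, ∀ q : ℚ, r < (q : ℝ).toNNReal →
      P x (Γ ∩ {ω | ((q : ℝ).toNNReal : ℝ≥0∞) < lifetime Δ X ω}) = 0 := by
    refine ae_all_iff.2 fun q => ?_
    by_cases hq : r < (q : ℝ).toNNReal
    · exact (hT _ hq).mono fun x hx _ => hx
    · exact ae_of_all _ fun x h => absurd h hq
  filter_upwards [hall] with x hx
  refine measure_mono_null ?_ (measure_iUnion_null fun q => measure_iUnion_null (hx q))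
  rintro ω ⟨hωΓ, hωr⟩
  obtain ⟨q, -, hrq, hqζ⟩ := ENNReal.lt_iff_exists_rat_btwn.1 hωr
  exact mem_iUnion₂.2 ⟨q, ENNReal.coe_lt_coe.1 hrq, hωΓ, hqζ⟩

end Qbar

lemma setOf_ite_le_eq_biUnion {Ω : Type*} (σ ζ : Ω → ℝ≥0∞) (t : ℝ≥0) :
    {ω | (if σ ω < ζ ω then σ ω else ∞) ≤ (t : ℝ≥0∞)} =
      ⋃ r ∈ Iic t ∩ insert t (range fun q : ℚ => (q : ℝ).toNNReal),
        {ω | σ ω ≤ (r : ℝ≥0∞)} ∩ {ω | (r : ℝ≥0∞) < ζ ω} := by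
  ext ω
  simp only [mem_ofPred_eq, mem_iUnion, mem_inter_iff, exists_prop]
  constructor
  · intro hle
    split_ifs at hle with hσζ
    · by_cases htζ : (t : ℝ≥0∞) < ζ ω
      · exact ⟨t, ⟨self_mem_Iic, mem_insert _ _⟩, hle, htζ⟩
      · obtain ⟨q, -, hσq, hqζ⟩ := ENNReal.lt_iff_exists_rat_btwn.1 hσζ
        exact ⟨_, ⟨ENNReal.coe_le_coe.1 (hqζ.le.trans (not_lt.1 htζ)),
          mem_insert_of_mem _ ⟨q, rfl⟩⟩, hσq.le, hqζ⟩
    · exact absurd hle (by simp)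
  · rintro ⟨r, ⟨hrt, -⟩, hσr, hrζ⟩
    rw [if_pos (hσr.trans_lt hrζ)]
    exact hσr.trans (ENNReal.coe_le_coe.2 hrt)

section Stopping

variable {S Ω : Type*} [MeasurableSpace S] [MeasurableSingletonClass S] {Δ : S}
  {X : ℝ≥0 → Ω → S} {θ : ℝ≥0 → Ω → Ω} {P : S → @Measure Ω (F0inf X)}
  [∀ x, IsProbabilityMeasure (P x)] {h : S → ℝ≥0∞} {α : ℝ} {μ : Measure S} {r t : ℝ≥0}

lemma HasMarkovProperty.inter_lt_lifetime_mem_Fhmu (hM : HasMarkovProperty X θ P)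
    (habs : IsAbsorbing Δ X) (hθ : ∀ s t ω, X t (θ s ω) = X (t + s) ω)
    (hstart : ∀ x, P x {ω | X 0 ω = x} = 1) (hP : Measurable P) (h_meas : Measurable h)
    (h_pos : ∀ x, x ≠ Δ → 0 < h x ∧ h x < ∞) {E : Set Ω} (hrt : r ≤ t)
    (hE : E ∈ Mmu Δ α h X P μ r) :
    E ∩ {ω | (r : ℝ≥0∞) < lifetime Δ X ω} ∈ Fhmu X P μ t := by
  obtain ⟨Λ', Γ, hΛ', hΓ, hsub, hQ⟩ := hE
  have hΓ' := F0plus_le_F0inf r _ hΓ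
  have hnull : μ.bind P (Γ ∩ {ω | (r : ℝ≥0∞) < lifetime Δ X ω}) = 0 :=
    measure_bind_eq_zero (hΓ'.inter (habs.measurableSet_lt_lifetime r))
      (ae_measure_inter_lt_lifetime_eq_zero habs h_meas h_pos hstart hP hΓ' hQ)
  refine mem_Fhmu_of_ae_eq hP (inter_mem_Fhmu hP (mem_Fhmu_of_measurableSet (F0_mono hrt _ hΛ'))
    (hM.setOf_lt_lifetime_mem_Fhmu habs hθ hstart hP hrt)) ?_
  rw [← measure_symmDiff_eq_zero_iff, ← inter_symmDiff_distrib_right, symmDiff_comm]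
  exact measure_mono_null (inter_subset_inter_left _ hsub) hnull

lemma HasMarkovProperty.inter_setOf_ite_le_mem_Fhmu (hM : HasMarkovProperty X θ P)
    (habs : IsAbsorbing Δ X) (hθ : ∀ s t ω, X t (θ s ω) = X (t + s) ω)
    (hstart : ∀ x, P x {ω | X 0 ω = x} = 1) (hP : Measurable P) (h_meas : Measurable h)
    (h_pos : ∀ x, x ≠ Δ → 0 < h x ∧ h x < ∞) {σ : Ω → ℝ≥0∞} {Λ : Set Ω}
    (hΛ : ∀ r : ℝ≥0, Λ ∩ {ω | σ ω ≤ (r : ℝ≥0∞)} ∈ Mmu Δ α h X P μ r) (t : ℝ≥0) :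
    Λ ∩ {ω | (if σ ω < lifetime Δ X ω then σ ω else ∞) ≤ (t : ℝ≥0∞)} ∈ Fhmu X P μ t := by
  rw [setOf_ite_le_eq_biUnion, inter_iUnion₂]
  refine biUnion_mem_Fhmu hP (((countable_range _).insert t).mono inter_subset_right)
    fun r hr => ?_
  rw [← inter_assoc]
  exact hM.inter_lt_lifetime_mem_Fhmu habs hθ hstart hP h_meas h_pos hr.1 (hΛ r)

end Stopping

theorem sigma_zeta_is_Fhmu_stopping_time_general
    {S : Type*} [MeasurableSpace S]
    [StandardBorelSpace S] {Ω : Type*} (Δ : S)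
    (X : ℝ≥0 → Ω → S) (θ : ℝ≥0 → Ω → Ω) (P : S → @Measure Ω (F0inf X))
    (h : S → ℝ≥0∞) (α : ℝ)
    (h_meas : Measurable h)
    (h_pos : ∀ x : S, x ≠ Δ → 0 < h x ∧ h x < ∞)
    (hX_absorb : ∀ (ω : Ω) (s t : ℝ≥0), s ≤ t → X s ω = Δ → X t ω = Δ)
    (hshift : ∀ (s t : ℝ≥0) (ω : Ω), X t (θ s ω) = X (t + s) ω)
    (hP_prob : ∀ x : S, IsProbabilityMeasure (P x))
    (hP_meas : ∀ Λ : Set Ω, MeasurableSet[F0inf X] Λ → Measurable fun x => P x Λ)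
    (hP_start : ∀ x : S, P x {ω | X 0 ω = x} = 1)
    (hMarkov : ∀ (s : ℝ≥0) (x : S) (Y : Ω → ℝ≥0∞), Measurable[F0inf X] Y →
      ∀ Λ : Set Ω, MeasurableSet[F0plus X s] Λ →
        ∫⁻ ω in Λ, Y (θ s ω) ∂(P x)
          = ∫⁻ ω in Λ, (∫⁻ ω', Y ω' ∂(P (X s ω))) ∂(P x))
    :
    ∀ (μ : Measure S), IsProbabilityMeasure μ →
    ∀ σ : Ω → ℝ≥0∞, (∀ t : ℝ≥0, {ω | σ ω ≤ (t : ℝ≥0∞)} ∈ Mmu Δ α h X P μ t) →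
      (∀ t : ℝ≥0,
        {ω | (if σ ω < lifetime Δ X ω then σ ω else ∞) ≤ (t : ℝ≥0∞)}
          ∈ Fhmu X P μ t) ∧
      ∀ Λ ∈ Mmusigma Δ α h X P μ σ,
        (Λ ∩ {ω | σ ω < lifetime Δ X ω})
          ∈ FhmuStop X P μ fun ω => if σ ω < lifetime Δ X ω then σ ω else ∞ := by
  intro μ _ σ hσ
  have hM : HasMarkovProperty X θ P := hMarkov
  have hP : Measurable P := Measure.measurable_of_measurable_coe P hP_meas
  refine ⟨fun t => ?_, fun Λ hΛ t => ?_⟩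
  · simpa using hM.inter_setOf_ite_le_mem_Fhmu hX_absorb hshift hP_start hP h_meas h_pos
      (Λ := univ) (by simpa using hσ) t
  · have hlt : {ω | (if σ ω < lifetime Δ X ω then σ ω else ∞) ≤ (t : ℝ≥0∞)}
        ⊆ {ω | σ ω < lifetime Δ X ω} := fun ω hω => by
      simp only [mem_ofPred_eq] at hω ⊢
      by_contra hσζ
      simp [hσζ] at hω
    rw [inter_assoc, inter_eq_right.2 hlt]
    exact hM.inter_setOf_ite_le_mem_Fhmu hX_absorb hshift hP_start hP h_meas h_pos hΛ.2 t

theorem sigma_zeta_is_Fhmu_stopping_time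
    {S : Type*} [MeasurableSpace S] [TopologicalSpace S] [BorelSpace S]
    [StandardBorelSpace S] {Ω : Type*} (Δ : S)
    (X : ℝ≥0 → Ω → S) (θ : ℝ≥0 → Ω → Ω) (P : S → @Measure Ω (F0inf X))
    (h : S → ℝ≥0∞) (α : ℝ) (hα : 0 < α)
    (h_meas : Measurable h) (h_cem : h Δ = 0)
    (h_pos : ∀ x : S, x ≠ Δ → 0 < h x ∧ h x < ∞)
    (hX_rc : ∀ (ω : Ω) (t : ℝ≥0),
      Filter.Tendsto (fun s => X s ω) (nhdsWithin t (Set.Ioi t)) (nhds (X t ω)))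
    (hX_absorb : ∀ (ω : Ω) (s t : ℝ≥0), s ≤ t → X s ω = Δ → X t ω = Δ)
    (hshift : ∀ (s t : ℝ≥0) (ω : Ω), X t (θ s ω) = X (t + s) ω)
    (hP_prob : ∀ x : S, IsProbabilityMeasure (P x))
    (hP_meas : ∀ Λ : Set Ω, MeasurableSet[F0inf X] Λ → Measurable fun x => P x Λ)
    (hP_start : ∀ x : S, P x {ω | X 0 ω = x} = 1)
    (hMarkov : ∀ (s : ℝ≥0) (x : S) (Y : Ω → ℝ≥0∞), Measurable[F0inf X] Y →
      ∀ Λ : Set Ω, MeasurableSet[F0plus X s] Λ →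
        ∫⁻ ω in Λ, Y (θ s ω) ∂(P x)
          = ∫⁻ ω in Λ, (∫⁻ ω', Y ω' ∂(P (X s ω))) ∂(P x))
    :
    ∀ (μ : Measure S), IsProbabilityMeasure μ →
    ∀ σ : Ω → ℝ≥0∞, (∀ t : ℝ≥0, {ω | σ ω ≤ (t : ℝ≥0∞)} ∈ Mmu Δ α h X P μ t) →
      (∀ t : ℝ≥0,
        {ω | (if σ ω < lifetime Δ X ω then σ ω else ∞) ≤ (t : ℝ≥0∞)}
          ∈ Fhmu X P μ t) ∧
      ∀ Λ ∈ Mmusigma Δ α h X P μ σ,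
        (Λ ∩ {ω | σ ω < lifetime Δ X ω})
          ∈ FhmuStop X P μ fun ω => if σ ω < lifetime Δ X ω then σ ω else ∞ :=
  sigma_zeta_is_Fhmu_stopping_time_general Δ X θ P h α h_meas h_pos hX_absorb hshift hP_prob hP_meas
    hP_start hMarkov
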